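/- Let g ≥ 1, n ≥ 0 with 2g − 2 + n > 0, and let n₁, …, n_p be positive integers with n₁ + … + n_p = n. Let Γ be a finite connected graph with a genus function g: V(Γ) → ℕ and leg counts n_k(v) of legs labeled k at vertex v, with total genus g and Σ_v n_k(v) = n_k. Suppose d₁, d₂ ∈ ℤ both satisfy gcd(d_i − g + 1, 2g − 2, n₁, …, n_p) = 1. Then there exists an Aut(Γ)-equivariant bijection Pic^{d₁}(Γ) → Pic^{d₂}(Γ). -/

import Mathlib

/-!
The degree map identifies `Pic^d(Γ)` with a coset of `Pic^0(Γ)`, and `Pic^0(Γ)` is finite: on a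
connected graph a function that is harmonic for the Laplacian is constant (maximum principle), so
the twists span the degree-zero vectors over `ℚ` and every degree-zero class is torsion. Hence
`x ↦ m • x + c` is a bijection `Pic^{d₁} → Pic^{d₂}` as soon as `m` is prime to the exponent of
`Pic^0` and `deg c = d₂ - m d₁`. The gcd hypotheses allow an odd `m` with
`m (d₁ - g + 1) ≡ d₂ - g + 1` modulo `G = gcd(2g - 2, n₁, …, n_p)`, which makes `d₂ - m d₁` a
multiple of `G`. So `c` can be taken in the subgroup generated by the canonical class and the leg
classes, which every automorphism fixes, and then the map commutes with automorphisms.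
-/

open Finset

variable (V : Type) [Fintype V] [DecidableEq V]

/-- The twist multidegree at a vertex `v` of a multigraph with edge-multiplicity
function `E`: its value at `v` is minus the number of (non-loop) edges at `v`, and
its value at a neighbour `w ≠ v` is the number of edges between `v` and `w`
(loops contribute `0` in total). -/
def twistAt (E : V → V → ℕ) (v : V) : V → ℤ :=
  fun w => if w = v then -(∑ u ∈ Finset.univ.erase v, (E v u : ℤ)) else (E v w : ℤ)

/-- The subgroup of `ℤ^{V}` generated by the twist multidegrees. -/
def TwistSubgroup (E : V → V → ℕ) : AddSubgroup (V → ℤ) :=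
  AddSubgroup.closure (Set.range (twistAt V E))

/-- The Picard group `Pic(Γ) = ℤ^{V(Γ)}/Twist_Γ` of the multigraph. -/
abbrev Pic (E : V → V → ℕ) := (V → ℤ) ⧸ TwistSubgroup V E

/-- The subset of `Pic(Γ)` of classes of multidegrees of total degree `d`. -/
def PicDeg (E : V → V → ℕ) (d : ℤ) : Set (Pic V E) :=
  {x | ∃ f : V → ℤ, (QuotientAddGroup.mk f : Pic V E) = x ∧ ∑ v, f v = d}

/-- Connectivity of the multigraph with edge multiplicity `E`. -/
def GraphConn (E : V → V → ℕ) : Prop :=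
  ∀ u v : V, Relation.ReflTransGen (fun a b => 0 < E a b) u v

/-- Number of edges (loops counted once). -/
def numEdges (E : V → V → ℕ) : ℕ := ((∑ u, ∑ v, E u v) + ∑ v, E v v) / 2

/-- First Betti number `|E| - |V| + 1`, as an integer. -/
def betti1 (E : V → V → ℕ) : ℤ := (numEdges V E : ℤ) - Fintype.card V + 1

/-- Total genus `Σ_v g(v) + b₁(Γ)` of a multigraph with genus function `gv`. -/
def totalGenus (E : V → V → ℕ) (gv : V → ℕ) : ℤ := (∑ v, (gv v : ℤ)) + betti1 V E

lemma exists_nsmul_mem_closure_of_mem_span_rat {ι X : Type*} [Fintype ι] (w : ι → X → ℤ)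
    {f : X → ℤ} (hf : (fun x => (f x : ℚ)) ∈ Submodule.span ℚ (Set.range fun i x => (w i x : ℚ))) :
    ∃ N : ℕ, 0 < N ∧ (N : ℤ) • f ∈ AddSubgroup.closure (Set.range w) := by
  obtain ⟨c, hc⟩ := (Submodule.mem_span_range_iff_exists_fun ℚ).mp hf
  set N := ∏ i, (c i).den
  have integral : ∀ i, ∃ a : ℤ, (a : ℚ) = N * c i := fun i => by
    obtain ⟨t, ht⟩ : (c i).den ∣ N := dvd_prod_of_mem _ (mem_univ i)
    exact ⟨t * (c i).num, by push_cast; rw [ht, ← Rat.mul_den_eq_num]; push_cast; ring⟩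
  choose a ha using integral
  have expand : (N : ℤ) • f = ∑ i, a i • w i := funext fun x => Int.cast_injective (α := ℚ) <| by
    simp only [← congrFun hc x, Pi.smul_apply, Finset.sum_apply, smul_eq_mul, Int.cast_mul,
      Int.cast_sum, ha, Int.cast_natCast, mul_sum, mul_assoc]
  refine ⟨N, prod_pos fun i _ => (c i).pos, expand ▸ ?_⟩
  exact AddSubgroup.sum_mem _ fun i _ =>
    AddSubgroup.zsmul_mem _ (AddSubgroup.subset_closure (Set.mem_range_self i)) _

lemma AddSubgroup.finite_of_forall_isOfFinAddOrder {A : Type*} [AddCommGroup A] [AddGroup.FG A]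
    (K : AddSubgroup A) (hK : ∀ x ∈ K, IsOfFinAddOrder x) : Finite K := by
  have : Module.Finite ℤ A := Module.Finite.iff_addGroup_fg.mpr ‹_›
  have : AddGroup.FG K := by
    rw [AddGroup.fg_iff_addSubgroup_fg, ← K.toIntSubmodule_toAddSubgroup,
      ← Submodule.fg_iff_addSubgroup_fg]
    exact IsNoetherian.noetherian _
  exact AddCommGroup.finite_of_fg_isAddTorsion K fun x =>
    AddSubmonoid.isOfFinAddOrder_coe.mp (hK x x.2)

lemma bijOn_zsmul_add_preimage {A : Type*} [AddCommGroup A] (D : A →+ ℤ) {N : ℕ}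
    (htor : ∀ x, D x = 0 → N • x = 0) {m : ℤ} (hm : IsCoprime m N) {d₁ d₂ : ℤ}
    (hd₁ : ∃ x, D x = d₁) {c : A} (hc : D c = d₂ - m * d₁) :
    Set.BijOn (fun x => m • x + c) (D ⁻¹' {d₁}) (D ⁻¹' {d₂}) := by
  obtain ⟨u, w, huw⟩ := hm
  have cancel : ∀ t, D t = 0 → u • m • t = t := fun t ht => by
    calc u • m • t = (u * m + w * N) • t - w • (N • t) := by
          rw [add_smul, mul_smul, mul_smul, natCast_zsmul]; abel
      _ = t := by rw [huw, htor t ht, one_smul, smul_zero, sub_zero]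
  refine ⟨fun x hx => ?_, fun x hx y hy hxy => ?_, fun y hy => ?_⟩
  · simp_all [Set.mem_preimage]
  · have hdiff : D (x - y) = 0 := by simp_all [Set.mem_preimage]
    have : m • (x - y) = 0 := by rw [smul_sub, sub_eq_zero]; exact add_right_cancel hxy
    rw [← sub_eq_zero, ← cancel _ hdiff, this, smul_zero]
  · obtain ⟨x₀, hx₀⟩ := hd₁
    set t := y - c - m • x₀
    have ht : D t = 0 := by simp_all [t, Set.mem_preimage]
    refine ⟨x₀ + u • t, by simp [Set.mem_preimage, ht, hx₀], ?_⟩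
    simp only [smul_add, smul_comm m u, cancel t ht, t]
    abel

lemma exists_isCoprime_dvd_mul_sub {G N : ℕ} [NeZero G] [NeZero N] {a b : ℤ}
    (ha : IsCoprime a G) (hb : IsCoprime b G) : ∃ m : ℤ, IsCoprime m N ∧ (G : ℤ) ∣ m * a - b := by
  have isUnit_cast : ∀ {z : ℤ}, IsCoprime z G → IsUnit (z : ZMod G) := fun ⟨s, t, hst⟩ =>
    IsUnit.of_mul_eq_one_right (s : ZMod G) <| by
      simpa using congrArg (fun z : ℤ => (z : ZMod G)) hst
  -- lift the residue `b / a` to a unit modulo `G * N`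
  obtain ⟨w, hw⟩ := ZMod.unitsMap_surjective (m := G * N) (dvd_mul_right G N)
    ((isUnit_cast ha).unit⁻¹ * (isUnit_cast hb).unit)
  refine ⟨((w : ZMod (G * N)).val : ℤ), ?_, ?_⟩
  · exact Nat.isCoprime_iff_coprime.mpr (ZMod.val_coe_unit_coprime w).coprime_mul_left_right
  · have hval : ((w : ZMod (G * N)).val : ZMod G) =
        (((isUnit_cast ha).unit⁻¹ * (isUnit_cast hb).unit : (ZMod G)ˣ) : ZMod G) := by
      rw [← hw, ZMod.unitsMap_val, ZMod.natCast_val]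
    rw [← ZMod.intCast_zmod_eq_zero_iff_dvd]
    push_cast
    rw [hval, Units.val_mul, mul_right_comm, IsUnit.val_inv_mul, one_mul, IsUnit.unit_spec,
      sub_self]

lemma exists_isCoprime_dvd_sub_mul {G N : ℕ} [NeZero G] [NeZero N] {g d₁ d₂ : ℤ}
    (hG : (G : ℤ) ∣ 2 * g - 2) (h₁ : IsCoprime (d₁ - g + 1) G) (h₂ : IsCoprime (d₂ - g + 1) G) :
    ∃ m : ℤ, IsCoprime m N ∧ (G : ℤ) ∣ d₂ - m * d₁ := by
  obtain ⟨m, hm, hdvd⟩ := exists_isCoprime_dvd_mul_sub (N := 2 * N) h₁ h₂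
  rw [Nat.cast_mul, Nat.cast_two] at hm
  obtain ⟨k, rfl⟩ : Odd m := Int.isCoprime_two_right.mp hm.of_mul_right_left
  refine ⟨2 * k + 1, hm.of_mul_right_right, ?_⟩
  -- an odd multiplier fixes `g - 1` modulo `G`, because `G ∣ 2 (g - 1)`
  have : d₂ - (2 * k + 1) * d₁ =
      -((2 * k + 1) * (d₁ - g + 1) - (d₂ - g + 1)) - k * (2 * g - 2) := by ring
  rw [this]
  exact hdvd.neg_right.sub (hG.mul_left k)

lemma Int.mem_addSubgroup_of_gcd_dvd {ι : Type*} (H : AddSubgroup ℤ) {a : ℤ} {s : Finset ι}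
    {b : ι → ℕ} (ha : a ∈ H) (hb : ∀ i ∈ s, (b i : ℤ) ∈ H) {z : ℤ}
    (hz : (Int.gcd a (s.gcd b : ℕ) : ℤ) ∣ z) : z ∈ H := by
  obtain ⟨h, rfl⟩ := Int.subgroup_cyclic H
  simp only [← AddSubgroup.zmultiples_eq_closure, Int.mem_zmultiples_iff] at ha hb ⊢
  exact (Int.dvd_coe_gcd ha (Int.dvd_natCast.mpr (Finset.dvd_gcd fun i hi =>
    Int.dvd_natCast.mp (hb i hi)))).trans hz

variable {V}

section

variable {E : V → V → ℕ}

lemma sum_twistAt_mul {R : Type*} [CommRing R] (v : V) (h : V → R) :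
    ∑ w, (twistAt V E v w : R) * h w = ∑ u ∈ univ.erase v, (E v u : R) * (h u - h v) := by
  have off_diag : ∀ w ∈ univ.erase v, (twistAt V E v w : R) * h w = E v w * h w := fun w hw => by
    rw [twistAt, if_neg (ne_of_mem_erase hw), Int.cast_natCast]
  rw [← add_sum_erase _ _ (mem_univ v), sum_congr rfl off_diag, twistAt, if_pos rfl]
  simp only [mul_sub, sum_sub_distrib, ← sum_mul]
  push_cast
  ring

lemma sum_twistAt (v : V) : ∑ w, twistAt V E v w = 0 := by
  simpa using sum_twistAt_mul (R := ℤ) (E := E) v 1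

variable (E) in
def Pic.degree : Pic V E →+ ℤ :=
  QuotientAddGroup.lift (TwistSubgroup V E)
    (AddMonoidHom.mk' (fun f => ∑ v, f v) fun _ _ => sum_add_distrib)
    ((AddSubgroup.closure_le _).mpr <| by rintro _ ⟨v, rfl⟩; exact sum_twistAt v)

@[simp]
lemma Pic.degree_mk (f : V → ℤ) : Pic.degree E (QuotientAddGroup.mk f) = ∑ v, f v := rfl

lemma picDeg_eq_preimage (d : ℤ) : PicDeg V E d = Pic.degree E ⁻¹' {d} := by
  ext x
  obtain ⟨f, rfl⟩ := QuotientAddGroup.mk_surjective x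
  refine ⟨fun ⟨f', hf', hd⟩ => ?_, fun hd => ⟨f, rfl, hd⟩⟩
  rw [Set.mem_preimage, ← hf', Pic.degree_mk, hd, Set.mem_singleton_iff]

lemma eq_of_sum_twistAt_mul_eq_zero (hconn : GraphConn V E) {h : V → ℚ}
    (harmonic : ∀ v, ∑ w, (twistAt V E v w : ℚ) * h w = 0) (u v : V) : h u = h v := by
  obtain ⟨v₀, -, hmax⟩ := exists_max_image univ h ⟨u, mem_univ u⟩
  suffices ∀ w, h w = h v₀ by rw [this u, this v]
  intro w
  induction hconn v₀ w with
  | refl => rfl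
  | @tail b c _ hbc ih =>
    by_cases hcb : c = b
    · rw [hcb, ih]
    -- at a maximum of `h` every term of the balance equation is `≤ 0`, hence `= 0`
    have nonpos : ∀ u ∈ univ.erase b, (E b u : ℚ) * (h u - h b) ≤ 0 := fun u _ =>
      mul_nonpos_of_nonneg_of_nonpos (Nat.cast_nonneg _)
        (by rw [ih]; linarith [hmax u (mem_univ u)])
    have := (sum_eq_zero_iff_of_nonpos nonpos).mp ((sum_twistAt_mul b h).symm.trans (harmonic b))
      c (mem_erase.mpr ⟨hcb, mem_univ c⟩)
    rw [mul_eq_zero, sub_eq_zero] at this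
    exact this.resolve_left (Nat.cast_ne_zero.mpr hbc.ne') ▸ ih

lemma mem_span_twistAt_of_sum_eq_zero (hconn : GraphConn V E) {f : V → ℚ} (hf : ∑ v, f v = 0) :
    f ∈ Submodule.span ℚ (Set.range fun v w => (twistAt V E v w : ℚ)) := by
  rcases isEmpty_or_nonempty V with _ | ⟨⟨v₀⟩⟩
  · simp [Subsingleton.elim f 0]
  by_contra hnot
  obtain ⟨φ, hφf, hφ⟩ := Submodule.exists_dual_map_eq_bot_of_notMem hnot inferInstance
  set h : V → ℚ := fun v => φ fun w => if v = w then 1 else 0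
  have φ_apply : ∀ x, φ x = ∑ w, x w * h w := fun x => by
    simp only [LinearMap.pi_apply_eq_sum_univ φ x, smul_eq_mul, h]
  have harmonic : ∀ v, ∑ w, (twistAt V E v w : ℚ) * h w = 0 := fun v => by
    rw [← φ_apply, ← Submodule.mem_bot ℚ, ← hφ]
    exact Submodule.mem_map_of_mem (Submodule.subset_span ⟨v, rfl⟩)
  apply hφf
  rw [φ_apply, sum_congr rfl fun w _ => by rw [eq_of_sum_twistAt_mul_eq_zero hconn harmonic w v₀],
    ← sum_mul, hf, zero_mul]

lemma Pic.isOfFinAddOrder_of_degree_eq_zero (hconn : GraphConn V E) {x : Pic V E}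
    (hx : Pic.degree E x = 0) : IsOfFinAddOrder x := by
  obtain ⟨f, rfl⟩ := QuotientAddGroup.mk_surjective x
  have hf : ∑ v, (f v : ℚ) = 0 := by exact_mod_cast hx
  obtain ⟨N, hN, hmem⟩ :=
    exists_nsmul_mem_closure_of_mem_span_rat _ (mem_span_twistAt_of_sum_eq_zero hconn hf)
  refine isOfFinAddOrder_iff_nsmul_eq_zero.mpr ⟨N, hN, ?_⟩
  rw [← natCast_zsmul, ← QuotientAddGroup.mk_zsmul]
  exact (QuotientAddGroup.eq_zero_iff _).mpr hmem

lemma Pic.exists_nsmul_eq_zero_of_degree_eq_zero (hconn : GraphConn V E) :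
    ∃ N : ℕ, 0 < N ∧ ∀ x : Pic V E, Pic.degree E x = 0 → N • x = 0 := by
  have := AddSubgroup.finite_of_forall_isOfFinAddOrder (Pic.degree E).ker fun _ hx =>
    Pic.isOfFinAddOrder_of_degree_eq_zero hconn hx
  exact ⟨Nat.card (Pic.degree E).ker, Nat.card_pos, fun x hx =>
    congrArg Subtype.val (card_nsmul_eq_zero' (x := (⟨x, hx⟩ : (Pic.degree E).ker)))⟩

lemma two_mul_numEdges (hsymm : ∀ u v, E u v = E v u) :
    2 * numEdges V E = (∑ u, ∑ v, E u v) + ∑ v, E v v := by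
  refine Nat.mul_div_cancel' ((ZMod.natCast_eq_zero_iff _ 2).mp ?_)
  set f : V × V → ZMod 2 := fun x => E x.1 x.2 + if x.1 = x.2 then (E x.1 x.1 : ZMod 2) else 0
  -- the swap `(u, v) ↦ (v, u)` pairs off equal values of `f`, and `f (v, v) = 2 E v v`
  have hf : ∑ x, f x = 0 := by
    refine sum_involution (fun x _ => x.swap) (fun ⟨u, v⟩ _ => ?_)
      (fun ⟨u, v⟩ _ hne hswap => hne ?_) (fun _ _ => mem_univ _) (fun _ _ => Prod.swap_swap _)
    · simp only [f, Prod.swap, hsymm v u, eq_comm (a := v)]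
      split_ifs with h
      · subst h; exact CharTwo.add_self_eq_zero _
      · exact CharTwo.add_self_eq_zero _
    · obtain rfl : v = u := congrArg Prod.fst hswap
      simp only [f, if_pos]
      exact CharTwo.add_self_eq_zero _
  simpa [f, Fintype.sum_prod_type, sum_add_distrib] using hf

def canonicalMultidegree (E : V → V → ℕ) (gv : V → ℕ) (v : V) : ℤ :=
  2 * gv v - 2 + ∑ u, (E v u : ℤ) + E v v

lemma sum_canonicalMultidegree (hsymm : ∀ u v, E u v = E v u) (gv : V → ℕ) :
    ∑ v, canonicalMultidegree E gv v = 2 * totalGenus V E gv - 2 := by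
  have := congrArg (Nat.cast (R := ℤ)) (two_mul_numEdges hsymm)
  push_cast at this
  simp only [canonicalMultidegree, totalGenus, betti1, sum_add_distrib, sum_sub_distrib,
    ← mul_sum, sum_const, card_univ, nsmul_eq_mul]
  linarith

lemma Pic.map_mk_eq_self {σ : Equiv.Perm V} {Φ : Pic V E →+ Pic V E}
    (hΦ : ∀ f : V → ℤ,
      Φ (QuotientAddGroup.mk f) = QuotientAddGroup.mk (fun v => f (σ.symm v)))
    {f : V → ℤ} (hf : ∀ v, f (σ v) = f v) : Φ (QuotientAddGroup.mk f) = QuotientAddGroup.mk f := by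
  rw [hΦ]
  congr 1
  funext v
  simpa using (hf (σ.symm v)).symm

lemma Pic.map_mk_canonicalMultidegree {gv : V → ℕ} {σ : Equiv.Perm V}
    (hE : ∀ u v, E (σ u) (σ v) = E u v) (hg : ∀ v, gv (σ v) = gv v) {Φ : Pic V E →+ Pic V E}
    (hΦ : ∀ f : V → ℤ,
      Φ (QuotientAddGroup.mk f) = QuotientAddGroup.mk (fun v => f (σ.symm v))) :
    Φ (QuotientAddGroup.mk (canonicalMultidegree E gv)) =
      QuotientAddGroup.mk (canonicalMultidegree E gv) :=
  Pic.map_mk_eq_self hΦ fun v => by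
    simp only [canonicalMultidegree, hg, hE, ← Equiv.sum_comp σ (fun u => (E (σ v) u : ℤ))]

end

theorem stmt11_general (V : Type) [Fintype V] [DecidableEq V] (E : V → V → ℕ)
    (hsymm : ∀ u v, E u v = E v u) (hconn : GraphConn V E)
    (gv : V → ℕ) (p : ℕ) (hp : 0 < p)
    (nl : Fin p → V → ℕ) (nk : Fin p → ℕ) (hnk : ∀ k, nk k = ∑ v, nl k v)
    (g : ℤ)
    (hgΓ : totalGenus V E gv = g)
    (hpos : ∀ k, 0 < nk k)
    (d₁ d₂ : ℤ)
    (h₁ : Int.gcd (d₁ - g + 1)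
      ((Int.gcd (2 * g - 2) ((Finset.univ.gcd nk : ℕ) : ℤ) : ℕ) : ℤ) = 1)
    (h₂ : Int.gcd (d₂ - g + 1)
      ((Int.gcd (2 * g - 2) ((Finset.univ.gcd nk : ℕ) : ℤ) : ℕ) : ℤ) = 1) :
    ∃ F : Pic V E → Pic V E,
      Set.BijOn F (PicDeg V E d₁) (PicDeg V E d₂) ∧
      ∀ σ : Equiv.Perm V, (∀ u v, E (σ u) (σ v) = E u v) →
        (∀ v, gv (σ v) = gv v) → (∀ k v, nl k (σ v) = nl k v) →
        ∀ Φ : Pic V E →+ Pic V E,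
          (∀ f : V → ℤ,
            Φ (QuotientAddGroup.mk f) = QuotientAddGroup.mk (fun v => f (σ.symm v))) →
          ∀ x ∈ PicDeg V E d₁, F (Φ x) = Φ (F x) := by
  have hnk₀ : nk ⟨0, hp⟩ ≠ 0 := (hpos _).ne'
  have : NeZero (Int.gcd (2 * g - 2) ((univ.gcd nk : ℕ) : ℤ)) :=
    ⟨Int.gcd_ne_zero_right (by exact_mod_cast mt (gcd_eq_zero_iff.mp · _ (mem_univ _)) hnk₀)⟩
  obtain ⟨N, hN, htor⟩ := Pic.exists_nsmul_eq_zero_of_degree_eq_zero hconn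
  have : NeZero N := ⟨hN.ne'⟩
  obtain ⟨m, hm, hdvd⟩ := exists_isCoprime_dvd_sub_mul (N := N) (Int.gcd_dvd_left _ _)
    (Int.isCoprime_iff_gcd_eq_one.mpr h₁) (Int.isCoprime_iff_gcd_eq_one.mpr h₂)
  set A := AddSubgroup.closure (insert (QuotientAddGroup.mk (canonicalMultidegree E gv))
    (Set.range fun k => (QuotientAddGroup.mk fun v => (nl k v : ℤ) : Pic V E)))
  obtain ⟨c, hcA, hc⟩ : ∃ c ∈ A, Pic.degree E c = d₂ - m * d₁ := by
    refine AddSubgroup.mem_map.mp (Int.mem_addSubgroup_of_gcd_dvd _ ?_ (fun k _ => ?_) hdvd)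
    · refine ⟨_, AddSubgroup.subset_closure (Set.mem_insert _ _), ?_⟩
      simp [sum_canonicalMultidegree hsymm, hgΓ]
    · refine ⟨_, AddSubgroup.subset_closure (Set.mem_insert_of_mem _ ⟨k, rfl⟩), ?_⟩
      simp [hnk]
  obtain ⟨v₀, -, -⟩ := exists_ne_zero_of_sum_ne_zero (hnk _ ▸ hnk₀)
  refine ⟨fun x => m • x + c, ?_, fun σ hE hg hn Φ hΦ x _ => ?_⟩
  · rw [picDeg_eq_preimage, picDeg_eq_preimage]
    exact bijOn_zsmul_add_preimage _ htor hm ⟨QuotientAddGroup.mk (Pi.single v₀ d₁), by simp⟩ hc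
  · have hΦc : Φ c = c := by
      refine (AddSubgroup.closure_le (AddMonoidHom.eqLocus Φ (.id _))).mpr ?_ hcA
      rintro _ (rfl | ⟨k, rfl⟩)
      · exact Pic.map_mk_canonicalMultidegree hE hg hΦ
      · exact Pic.map_mk_eq_self hΦ fun v => by rw [hn]
    simp only [map_add, map_zsmul, hΦc]

/-- Lemma `Lem:dmultiplication`: if `d₁, d₂` both satisfy
`gcd(dᵢ - g + 1, 2g - 2, n₁, …, n_p) = 1` then there is an `Aut(Γ)`-equivariant
bijection `Pic^{d₁}(Γ) → Pic^{d₂}(Γ)`. -/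
theorem stmt11 (V : Type) [Fintype V] [DecidableEq V] (E : V → V → ℕ)
    (hsymm : ∀ u v, E u v = E v u) (hconn : GraphConn V E)
    (gv : V → ℕ) (p : ℕ) (hp : 0 < p)
    (nl : Fin p → V → ℕ) (nk : Fin p → ℕ) (hnk : ∀ k, nk k = ∑ v, nl k v)
    (g n : ℤ) (hg : 1 ≤ g) (hn : 0 ≤ n) (hhyp : 0 < 2 * g - 2 + n)
    (hgΓ : totalGenus V E gv = g)
    (hnk' : (∑ k, (nk k : ℤ)) = n) (hpos : ∀ k, 0 < nk k)
    (d₁ d₂ : ℤ)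
    (h₁ : Int.gcd (d₁ - g + 1)
      ((Int.gcd (2 * g - 2) ((Finset.univ.gcd nk : ℕ) : ℤ) : ℕ) : ℤ) = 1)
    (h₂ : Int.gcd (d₂ - g + 1)
      ((Int.gcd (2 * g - 2) ((Finset.univ.gcd nk : ℕ) : ℤ) : ℕ) : ℤ) = 1) :
    ∃ F : Pic V E → Pic V E,
      Set.BijOn F (PicDeg V E d₁) (PicDeg V E d₂) ∧
      ∀ σ : Equiv.Perm V, (∀ u v, E (σ u) (σ v) = E u v) →
        (∀ v, gv (σ v) = gv v) → (∀ k v, nl k (σ v) = nl k v) →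
        ∀ Φ : Pic V E →+ Pic V E,
          (∀ f : V → ℤ,
            Φ (QuotientAddGroup.mk f) = QuotientAddGroup.mk (fun v => f (σ.symm v))) →
          ∀ x ∈ PicDeg V E d₁, F (Φ x) = Φ (F x) :=
  stmt11_general V E hsymm hconn gv p hp nl nk hnk g hgΓ hpos d₁ d₂ h₁ h₂
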